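/- The cardinal invariants 𝔬 (minimum size of a maximal off-branch family in ω^{<ω}) and 𝔬_b (minimum size of a maximal off-binary family in 2^{<ω}) are equal. -/

import Mathlib

/-- A branch of the tree `ω^{<ω}`: a maximal chain in the initial-segment order. -/
def IsBranch (b : Set (List ℕ)) : Prop := IsMaxChain (· <+: ·) b

/-- A set of nodes of `ω^{<ω}` is off-branch if it meets every branch finitely. -/
def OffBranch (A : Set (List ℕ)) : Prop := ∀ b, IsBranch b → (A ∩ b).Finite

/-- A maximal off-branch family in `ω^{<ω}`. -/
def MaxOffBranchFam (𝒪 : Set (Set (List ℕ))) : Prop :=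
  ((∀ A ∈ 𝒪, A.Infinite ∧ OffBranch A) ∧ 𝒪.Pairwise (fun A B => (A ∩ B).Finite)) ∧
  ∀ B : Set (List ℕ), B.Infinite → OffBranch B → ∃ A ∈ 𝒪, (B ∩ A).Infinite

/-- A branch of the binary tree `2^{<ω}`: a maximal chain in the initial-segment order. -/
def IsBinBranch (b : Set (List Bool)) : Prop := IsMaxChain (· <+: ·) b

/-- A set of nodes of `2^{<ω}` is off-binary if it meets every branch finitely. -/
def OffBinary (A : Set (List Bool)) : Prop := ∀ b, IsBinBranch b → (A ∩ b).Finite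

/-- A maximal off-binary family in `2^{<ω}`. -/
def MaxOffBinaryFam (𝒪 : Set (Set (List Bool))) : Prop :=
  ((∀ A ∈ 𝒪, A.Infinite ∧ OffBinary A) ∧ 𝒪.Pairwise (fun A B => (A ∩ B).Finite)) ∧
  ∀ B : Set (List Bool), B.Infinite → OffBinary B → ∃ A ∈ 𝒪, (B ∩ A).Infinite

/-- `𝔬`: the least cardinality of a maximal off-branch family. -/
noncomputable def frakO : Cardinal :=
  sInf {c | ∃ 𝒪 : Set (Set (List ℕ)), MaxOffBranchFam 𝒪 ∧ Cardinal.mk ↥𝒪 = c}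

/-- `𝔬_b`: the least cardinality of a maximal off-binary family. -/
noncomputable def frakOb : Cardinal :=
  sInf {c | ∃ 𝒪 : Set (Set (List Bool)), MaxOffBinaryFam 𝒪 ∧ Cardinal.mk ↥𝒪 = c}

/-!
If `g` maps one tree of finite sequences into another so that `g s` is a prefix of `g t` exactly
when `s` is a prefix of `t`, then `g` maps chains to chains and pulls chains back to chains. Hence
preimages and images of off-branch sets are off-branch, and the infinite traces `g ⁻¹' A` of a
maximal off-branch family form a maximal off-branch family: an infinite off-branch set `B` is
caught because its image `g '' B` is. So the invariant of the domain tree is at most that of the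
target. The binary tree embeds into `ω^{<ω}` by inclusion, and `ω^{<ω}` into the binary tree by
coding `n` as `0ⁿ1`.
-/

universe u

theorem exists_maximal_pairwise {γ : Type*} (S : Set γ) (r : γ → γ → Prop) [Std.Symm r] :
    ∃ 𝒪 ⊆ S, 𝒪.Pairwise r ∧ ∀ x ∈ S, (∀ A ∈ 𝒪, r x A) → x ∈ 𝒪 := by
  obtain ⟨M, hM⟩ := zorn_subset {𝒪 | 𝒪 ⊆ S ∧ 𝒪.Pairwise r} fun c hcS hc =>
    ⟨⋃₀ c, ⟨Set.sUnion_subset fun s hs => (hcS hs).1, hc.pairwise_sUnion.2 fun s hs => (hcS hs).2⟩,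
      fun _ => Set.subset_sUnion_of_mem⟩
  refine ⟨M, hM.prop.1, hM.prop.2, fun x hxS hx => ?_⟩
  have hins : insert x M ∈ {𝒪 | 𝒪 ⊆ S ∧ 𝒪.Pairwise r} :=
    ⟨Set.insert_subset hxS hM.prop.1,
      Set.pairwise_insert_of_symm.2 ⟨hM.prop.2, fun A hA _ => hx A hA⟩⟩
  exact hM.2 hins (Set.subset_insert x M) (Set.mem_insert x M)

section OffBranch

variable {α β : Type u}

def IsOffBranch (A : Set (List α)) : Prop := ∀ b, IsMaxChain (· <+: ·) b → (A ∩ b).Finite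

def IsMaxOffFamily (𝒪 : Set (Set (List α))) : Prop :=
  ((∀ A ∈ 𝒪, A.Infinite ∧ IsOffBranch A) ∧ 𝒪.Pairwise (fun A B => (A ∩ B).Finite)) ∧
  ∀ B : Set (List α), B.Infinite → IsOffBranch B → ∃ A ∈ 𝒪, (B ∩ A).Infinite

variable (α) in
noncomputable def offNumber : Cardinal.{u} :=
  sInf {c | ∃ 𝒪 : Set (Set (List α)), IsMaxOffFamily 𝒪 ∧ Cardinal.mk 𝒪 = c}

theorem frakO_eq_offNumber : frakO = offNumber ℕ := rfl

theorem frakOb_eq_offNumber : frakOb = offNumber Bool := rfl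

theorem exists_isMaxOffFamily : ∃ 𝒪 : Set (Set (List α)), IsMaxOffFamily 𝒪 := by
  have : Std.Symm fun A B : Set (List α) => (A ∩ B).Finite :=
    ⟨fun A B h => by rwa [Set.inter_comm]⟩
  obtain ⟨𝒪, h𝒪S, hAD, hmax⟩ :=
    exists_maximal_pairwise {A : Set (List α) | A.Infinite ∧ IsOffBranch A} (fun A B => (A ∩ B).Finite)
  refine ⟨𝒪, ⟨h𝒪S, hAD⟩, fun B hBinf hBoff => ?_⟩
  by_contra! hfin
  exact hBinf (Set.inter_self B ▸ hfin B (hmax B ⟨hBinf, hBoff⟩ hfin))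

variable (α) in
theorem exists_isMaxOffFamily_mk_eq_offNumber :
    ∃ 𝒪 : Set (Set (List α)), IsMaxOffFamily 𝒪 ∧ Cardinal.mk 𝒪 = offNumber α := by
  obtain ⟨𝒪, h𝒪⟩ := exists_isMaxOffFamily (α := α)
  exact csInf_mem (s := {c | ∃ 𝒪 : Set (Set (List α)), IsMaxOffFamily 𝒪 ∧ Cardinal.mk 𝒪 = c})
    ⟨_, 𝒪, h𝒪, rfl⟩

section PrefixEmbedding

variable {g : List α → List β} (hg : ∀ s t, g s <+: g t ↔ s <+: t)
include hg

theorem injective_of_prefix_iff : Function.Injective g := fun s t h =>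
  have hst : s <+: t := (hg s t).1 (h ▸ List.prefix_refl _)
  have hts : t <+: s := (hg t s).1 (h ▸ List.prefix_refl _)
  hst.eq_of_length (hst.length_le.antisymm hts.length_le)

theorem IsOffBranch.preimage {A : Set (List β)} (hA : IsOffBranch A) : IsOffBranch (g ⁻¹' A) := by
  intro b hb
  have hchain : IsChain (· <+: ·) (g '' b) := by
    rintro _ ⟨x, hx, rfl⟩ _ ⟨y, hy, rfl⟩ hne
    exact (hb.1 hx hy fun h => hne (h ▸ rfl)).imp (hg x y).2 (hg y x).2
  obtain ⟨c, hc, hbc⟩ := hchain.exists_maxChain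
  have hsub : g '' (g ⁻¹' A ∩ b) ⊆ A ∩ c := by
    rintro _ ⟨x, ⟨hxA, hxb⟩, rfl⟩
    exact ⟨hxA, hbc ⟨x, hxb, rfl⟩⟩
  exact ((hA c hc).subset hsub).of_finite_image (injective_of_prefix_iff hg).injOn

theorem IsOffBranch.image {B : Set (List α)} (hB : IsOffBranch B) : IsOffBranch (g '' B) := by
  intro c hc
  have hchain : IsChain (· <+: ·) (g ⁻¹' c) := fun x hx y hy hne =>
    (hc.1 hx hy fun h => hne (injective_of_prefix_iff hg h)).imp (hg x y).1 (hg y x).1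
  obtain ⟨b, hb, hcb⟩ := hchain.exists_maxChain
  have hsub : g '' B ∩ c ⊆ g '' (B ∩ b) := by
    rintro _ ⟨⟨x, hxB, rfl⟩, hxc⟩
    exact ⟨x, ⟨hxB, hcb hxc⟩, rfl⟩
  exact ((hB b hb).image g).subset hsub

theorem IsMaxOffFamily.preimage {𝒪 : Set (Set (List β))} (h𝒪 : IsMaxOffFamily 𝒪) :
    IsMaxOffFamily ((g ⁻¹' ·) '' {A ∈ 𝒪 | (g ⁻¹' A).Infinite}) := by
  have hginj := injective_of_prefix_iff hg
  refine ⟨⟨?_, ?_⟩, fun B hBinf hBoff => ?_⟩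
  · rintro _ ⟨A, ⟨hA𝒪, hAinf⟩, rfl⟩
    exact ⟨hAinf, (h𝒪.1.1 A hA𝒪).2.preimage hg⟩
  · rintro _ ⟨A, ⟨hA𝒪, -⟩, rfl⟩ _ ⟨A', ⟨hA'𝒪, -⟩, rfl⟩ hne
    exact Set.preimage_inter ▸ (h𝒪.1.2 hA𝒪 hA'𝒪 fun h => hne (h ▸ rfl)).preimage hginj.injOn
  · obtain ⟨A, hA𝒪, hBA⟩ := h𝒪.2 (g '' B) (hBinf.image hginj.injOn) (hBoff.image hg)
    have hinf : (B ∩ g ⁻¹' A).Infinite := by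
      rw [← Set.image_inter_preimage] at hBA
      exact hBA.of_image g
    exact ⟨g ⁻¹' A, ⟨A, ⟨hA𝒪, hinf.mono Set.inter_subset_right⟩, rfl⟩, hinf⟩

theorem offNumber_le_of_prefix_iff : offNumber α ≤ offNumber β := by
  obtain ⟨𝒪, h𝒪, hcard⟩ := exists_isMaxOffFamily_mk_eq_offNumber β
  calc offNumber α ≤ Cardinal.mk ((g ⁻¹' ·) '' {A ∈ 𝒪 | (g ⁻¹' A).Infinite}) :=
        csInf_le' ⟨_, h𝒪.preimage hg, rfl⟩
    _ ≤ Cardinal.mk {A ∈ 𝒪 | (g ⁻¹' A).Infinite} := Cardinal.mk_image_le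
    _ ≤ Cardinal.mk 𝒪 := Cardinal.mk_le_mk_of_subset fun _ hA => hA.1
    _ = offNumber β := hcard

end PrefixEmbedding

theorem offNumber_le_of_injective {f : α → β} (hf : Function.Injective f) :
    offNumber α ≤ offNumber β :=
  offNumber_le_of_prefix_iff (g := List.map f) fun _ _ => List.prefix_map_iff_of_injective hf

end OffBranch

def unaryCode : List ℕ → List Bool := List.flatMap fun n => List.replicate n false ++ [true]

theorem replicate_false_append_true_prefix {a b : ℕ} {u v : List Bool}
    (h : List.replicate a false ++ true :: u <+: List.replicate b false ++ true :: v) :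
    a = b ∧ u <+: v := by
  induction a generalizing b with
  | zero => cases b <;> simp_all [List.replicate_succ]
  | succ a ih =>
    cases b with
    | zero => simp_all [List.replicate_succ]
    | succ b => simpa using ih (by simpa [List.replicate_succ] using h)

theorem unaryCode_prefix_iff (s t : List ℕ) : unaryCode s <+: unaryCode t ↔ s <+: t := by
  refine ⟨fun h => ?_, fun ⟨r, hr⟩ => ⟨unaryCode r, hr ▸ List.flatMap_append.symm⟩⟩
  induction s generalizing t with
  | nil => exact List.nil_prefix
  | cons a s ih =>
    cases t with
    | nil => simp [unaryCode] at h
    | cons b t =>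
      obtain ⟨rfl, hst⟩ := replicate_false_append_true_prefix (by simpa [unaryCode] using h)
      exact List.cons_prefix_cons.2 ⟨rfl, ih t hst⟩

/-- `𝔬 = 𝔬_b`. -/
theorem frakO_eq_frakOb : frakO = frakOb := by
  rw [frakO_eq_offNumber, frakOb_eq_offNumber]
  exact le_antisymm (offNumber_le_of_prefix_iff unaryCode_prefix_iff)
    (offNumber_le_of_injective (Encodable.encode_injective (α := Bool)))
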